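/- Fix a constant d > 0 and suppose f_2 is a function assigning to every 2-letter synchronizing automaton B with n' states a number f_2(B) with rt(B) ≤ f_2(B) ≤ d · ln(n') · rt(B). Let A = (Q, Σ, δ) be any synchronizing automaton with |Q| = n states and |Σ| = m ≥ 2 letters, m = 2^k, and let B(A) be the associated 2-letter automaton on Q × {0,1}^{≤ k} (with at most 2nm states) defined by δ'((q, w), x) = (q, wx) if |w| < k; δ'((q, w), 1) = (δ(q, a_{ℓ(w)}), λ) if |w| = k; δ'((q, w), 0) = (q, w) if |w| = k. Then rt(A) ≤ f_2(B(A)) / ⌈log₂ m + 1⌉ ≤ d · ln(2nm) · (rt(A) + 1). -/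

import Mathlib

/-!
`B(A)` simulates one letter `a` of `A` by spelling the `k` bits of its index and then reading `1`.
Since `0^k 1` empties the buffer from every state, a reset word `u` of `A` lifts to the reset word
`0^k 1 · enc(u)` of `B(A)`, of length `(k+1)(|u|+1)`. Conversely, the letters of `A` that `B(A)`
applies while reading a word `w` from the empty buffer act on the first components exactly as `w`
does, and there are at most `|w|/(k+1)` of them; so a reset word of `B(A)` yields a reset word of `A`
that is `k+1` times shorter. Hence `(k+1) rt(A) ≤ rt(B(A)) ≤ (k+1)(rt(A)+1)`, and `B(A)` has at
most `n · 2^(k+1)` states, from which both inequalities follow.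
-/

def wordAct {Q A : Type*} (δ : Q → A → Q) (q : Q) (w : List A) : Q :=
  w.foldl δ q

def IsResetWord {Q A : Type*} (δ : Q → A → Q) (w : List A) : Prop :=
  ∀ p q : Q, wordAct δ p w = wordAct δ q w

def Synchronizing {Q A : Type*} (δ : Q → A → Q) : Prop :=
  ∃ w : List A, IsResetWord δ w

noncomputable def resetThreshold {Q A : Type*} (δ : Q → A → Q) : ℕ :=
  sInf {n : ℕ | ∃ w : List A, w.length = n ∧ IsResetWord δ w}

/-- The value of a binary string read most-significant-bit first.  For strings of a
fixed length `k`, lexicographic order (with `false < true`) agrees with the order of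
`bitVal`, so the lexicographic index `ℓ(w) ∈ {1, …, 2^k}` equals `bitVal w + 1`. -/
def bitVal : List Bool → ℕ
  | [] => 0
  | b :: t => (if b then 1 else 0) * 2 ^ t.length + bitVal t

/-- The length-`k` binary string whose `bitVal` is `n % 2^k`; i.e. `ℓ⁻¹(n+1)` for `n < 2^k`. -/
def bits : ℕ → ℕ → List Bool
  | 0, _ => []
  | k + 1, n => decide (2 ^ k ≤ n % 2 ^ (k + 1)) :: bits k n

/-- The transition function of the 2-letter automaton `B(A)` on `Q × {0,1}^{≤k}`:
if `|w| < k` the letter is appended; if `|w| = k`, letter `1` applies the letter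
`a_{ℓ(w)}` of `A` and resets the string to `λ`, while letter `0` does nothing. -/
def deltaB {Q : Type*} (k : ℕ) (δ : Q → Fin (2 ^ k) → Q) :
    Q × {w : List Bool // w.length ≤ k} → Bool →
      Q × {w : List Bool // w.length ≤ k} :=
  fun s x =>
    if h : s.2.val.length < k then
      (s.1, ⟨s.2.val ++ [x], by simpa using h⟩)
    else if x then
      (δ s.1 ⟨bitVal s.2.val % 2 ^ k, Nat.mod_lt _ (by positivity)⟩,
        ⟨[], by simp⟩)
    else s

lemma wordAct_append {Q A : Type*} (δ : Q → A → Q) (q : Q) (u v : List A) :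
    wordAct δ q (u ++ v) = wordAct δ (wordAct δ q u) v :=
  List.foldl_append

lemma wordAct_cons {Q A : Type*} (δ : Q → A → Q) (q : Q) (a : A) (u : List A) :
    wordAct δ q (a :: u) = wordAct δ (δ q a) u :=
  rfl

lemma IsResetWord.resetThreshold_le_length {Q A : Type*} {δ : Q → A → Q} {w : List A}
    (hw : IsResetWord δ w) : resetThreshold δ ≤ w.length :=
  Nat.sInf_le ⟨w, rfl, hw⟩

lemma Synchronizing.exists_isResetWord_length_eq {Q A : Type*} {δ : Q → A → Q}
    (h : Synchronizing δ) : ∃ w : List A, IsResetWord δ w ∧ w.length = resetThreshold δ := by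
  obtain ⟨w, hw⟩ := h
  obtain ⟨u, hu, hreset⟩ := Nat.sInf_mem (s := {n | ∃ w : List A, w.length = n ∧ IsResetWord δ w})
    ⟨w.length, w, rfl, hw⟩
  exact ⟨u, hreset, hu⟩

lemma Real.log_natCast_le_log_natCast {a b : ℕ} (h : a ≤ b) : Real.log a ≤ Real.log b := by
  rcases a.eq_zero_or_pos with rfl | ha
  · simpa using Real.log_natCast_nonneg b
  · exact Real.log_le_log (by positivity) (by exact_mod_cast h)

lemma bits_length (k n : ℕ) : (bits k n).length = k := by
  induction k with
  | zero => rfl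
  | succ k ih => simp [bits, ih]

lemma bitVal_bits (k n : ℕ) : bitVal (bits k n) = n % 2 ^ k := by
  induction k with
  | zero => simp [bits, bitVal, Nat.mod_one]
  | succ k ih =>
    have hsplit := Nat.mod_pow_succ (x := n) (b := 2) (k := k)
    have htop : n / 2 ^ k % 2 < 2 := Nat.mod_lt _ two_pos
    simp only [bits, bitVal, bits_length, ih, hsplit, decide_eq_true_eq]
    interval_cases n / 2 ^ k % 2 <;> simp [Nat.mod_lt, Nat.add_comm]

section deltaB

variable {Q : Type*} {k : ℕ} (δ : Q → Fin (2 ^ k) → Q)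

/-- The letter `a_{ℓ(v)}` that `deltaB` applies when the buffer `v` is full. -/
def bufferLetter (k : ℕ) (v : List Bool) : Fin (2 ^ k) :=
  ⟨bitVal v % 2 ^ k, Nat.mod_lt _ (by positivity)⟩

lemma bufferLetter_bits (a : Fin (2 ^ k)) : bufferLetter k (bits k a) = a :=
  Fin.ext (by simp [bufferLetter, bitVal_bits, Nat.mod_eq_of_lt a.isLt])

lemma deltaB_of_length_lt (q : Q) {v : List Bool} (hv : v.length < k) (x : Bool) :
    deltaB k δ (q, ⟨v, hv.le⟩) x = (q, ⟨v ++ [x], by simpa using hv⟩) := by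
  simp [deltaB, hv]

lemma deltaB_true_of_not_length_lt (q : Q) {v : List Bool} (hvk : v.length ≤ k)
    (hv : ¬ v.length < k) :
    deltaB k δ (q, ⟨v, hvk⟩) true = (δ q (bufferLetter k v), ⟨[], by simp⟩) := by
  simp [deltaB, hv, bufferLetter]

lemma deltaB_false_of_not_length_lt (s : Q × {w : List Bool // w.length ≤ k})
    (hv : ¬ s.2.val.length < k) : deltaB k δ s false = s := by
  simp [deltaB, hv]

lemma wordAct_deltaB_of_length_add_le (q : Q) (v bs : List Bool)
    (h : v.length + bs.length ≤ k) :
    wordAct (deltaB k δ) (q, ⟨v, by omega⟩) bs = (q, ⟨v ++ bs, by simpa using h⟩) := by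
  induction bs generalizing v with
  | nil => simp [wordAct]
  | cons x bs ih =>
    simp only [List.length_cons] at h
    rw [wordAct_cons, deltaB_of_length_lt δ q (by omega),
      ih (v ++ [x]) (by simp only [List.length_append, List.length_singleton]; omega)]
    simp

lemma wordAct_deltaB_bits_true (q : Q) (a : Fin (2 ^ k)) :
    wordAct (deltaB k δ) (q, ⟨[], by simp⟩) (bits k a ++ [true]) =
      (δ q a, ⟨[], by simp⟩) := by
  rw [wordAct_append, wordAct_deltaB_of_length_add_le δ q [] _ (by simp [bits_length])]
  simpa [wordAct, bufferLetter_bits] using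
    deltaB_true_of_not_length_lt δ q (v := bits k a) (by simp [bits_length])
      (by simp [bits_length])


def encodeB (k : ℕ) (u : List (Fin (2 ^ k))) : List Bool :=
  u.flatMap fun a : Fin (2 ^ k) => bits k a.val ++ [true]

lemma length_encodeB (u : List (Fin (2 ^ k))) : (encodeB k u).length = (k + 1) * u.length := by
  simp [encodeB, bits_length, mul_comm]

lemma wordAct_deltaB_encodeB (q : Q) (u : List (Fin (2 ^ k))) :
    wordAct (deltaB k δ) (q, ⟨[], by simp⟩) (encodeB k u) = (wordAct δ q u, ⟨[], by simp⟩) := by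
  induction u generalizing q with
  | nil => rfl
  | cons a u ih =>
    rw [encodeB, List.flatMap_cons, wordAct_append, wordAct_deltaB_bits_true, ← encodeB, ih,
      wordAct_cons]

lemma exists_wordAct_deltaB_replicate_false (m : ℕ) (s : Q × {w : List Bool // w.length ≤ k})
    (hm : k ≤ s.2.val.length + m) :
    ∃ v : {w : List Bool // w.length ≤ k}, ¬ v.val.length < k ∧
      wordAct (deltaB k δ) s (List.replicate m false) = (s.1, v) := by
  induction m generalizing s with
  | zero => exact ⟨s.2, by omega, rfl⟩
  | succ m ih =>
    obtain ⟨q, v, hv⟩ := s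
    dsimp only at hm
    rw [List.replicate_succ, wordAct_cons]
    by_cases hlt : v.length < k
    · rw [deltaB_of_length_lt δ q hlt]
      exact ih _ (by simp only [List.length_append, List.length_singleton]; omega)
    · rw [deltaB_false_of_not_length_lt δ _ hlt]
      exact ih _ (by dsimp only; omega)

lemma exists_wordAct_deltaB_flush (s : Q × {w : List Bool // w.length ≤ k}) :
    ∃ q : Q, wordAct (deltaB k δ) s (List.replicate k false ++ [true]) = (q, ⟨[], by simp⟩) := by
  obtain ⟨⟨v, hv⟩, hfull, hrep⟩ := exists_wordAct_deltaB_replicate_false δ k s (by omega)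
  exact ⟨_, by rw [wordAct_append, hrep]; exact deltaB_true_of_not_length_lt δ s.1 hv hfull⟩

lemma IsResetWord.deltaB_flush_append_encodeB {u : List (Fin (2 ^ k))} (hu : IsResetWord δ u) :
    IsResetWord (deltaB k δ) (List.replicate k false ++ [true] ++ encodeB k u) := by
  intro s t
  obtain ⟨p, hp⟩ := exists_wordAct_deltaB_flush δ s
  obtain ⟨q, hq⟩ := exists_wordAct_deltaB_flush δ t
  rw [wordAct_append, wordAct_append _ t, hp, hq, wordAct_deltaB_encodeB,
    wordAct_deltaB_encodeB, hu p q]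

lemma resetThreshold_deltaB_le (hsync : Synchronizing δ) :
    resetThreshold (deltaB k δ) ≤ (k + 1) * (resetThreshold δ + 1) := by
  obtain ⟨u, hu, hlen⟩ := hsync.exists_isResetWord_length_eq
  calc resetThreshold (deltaB k δ)
      ≤ (List.replicate k false ++ [true] ++ encodeB k u).length :=
        (hu.deltaB_flush_append_encodeB δ).resetThreshold_le_length
    _ = (k + 1) * (resetThreshold δ + 1) := by
        simp only [List.length_append, List.length_replicate, List.length_singleton,
          length_encodeB, hlen]
        ring

/-- The letters of `A` that `deltaB` applies while reading `w` from buffer `v`. -/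
def decodeB (k : ℕ) : List Bool → List Bool → List (Fin (2 ^ k))
  | _, [] => []
  | v, x :: w =>
    if v.length < k then decodeB k (v ++ [x]) w
    else if x then bufferLetter k v :: decodeB k [] w
    else decodeB k v w

lemma fst_wordAct_deltaB (w : List Bool) (q : Q) (v : List Bool) (hv : v.length ≤ k) :
    (wordAct (deltaB k δ) (q, ⟨v, hv⟩) w).1 = wordAct δ q (decodeB k v w) := by
  induction w generalizing q v with
  | nil => rfl
  | cons x w ih =>
    rw [wordAct_cons, decodeB]
    by_cases hlt : v.length < k
    · rw [deltaB_of_length_lt δ q hlt, ih, if_pos hlt]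
    · cases x
      · rw [deltaB_false_of_not_length_lt δ _ hlt, ih, if_neg hlt, if_neg Bool.false_ne_true]
      · rw [deltaB_true_of_not_length_lt δ q hv hlt, ih, if_neg hlt, if_pos rfl, wordAct_cons]

lemma length_decodeB_le (w v : List Bool) (hv : v.length ≤ k) :
    (k + 1) * (decodeB k v w).length ≤ v.length + w.length := by
  induction w generalizing v with
  | nil => simp [decodeB]
  | cons x w ih =>
    rw [decodeB]
    by_cases hlt : v.length < k
    · have := ih (v ++ [x]) (by simpa using hlt)
      simp only [if_pos hlt, List.length_append, List.length_cons, List.length_nil] at this ⊢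
      omega
    · cases x
      · have := ih v hv
        simp only [if_neg hlt, Bool.false_eq_true, if_false, List.length_cons]
        omega
      · have := ih [] (by simp)
        simp only [if_neg hlt, if_true, List.length_cons, List.length_nil] at this ⊢
        rw [Nat.mul_succ]
        omega

lemma IsResetWord.decodeB {w : List Bool} (hw : IsResetWord (deltaB k δ) w) :
    IsResetWord δ (decodeB k [] w) := fun p q => by
  rw [← fst_wordAct_deltaB δ w p [] (by simp), ← fst_wordAct_deltaB δ w q [] (by simp),
    hw]

lemma mul_resetThreshold_le_resetThreshold_deltaB (hsync : Synchronizing (deltaB k δ)) :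
    (k + 1) * resetThreshold δ ≤ resetThreshold (deltaB k δ) := by
  obtain ⟨w, hw, hlen⟩ := hsync.exists_isResetWord_length_eq
  calc (k + 1) * resetThreshold δ
      ≤ (k + 1) * (decodeB k [] w).length :=
        Nat.mul_le_mul_left _ (hw.decodeB δ).resetThreshold_le_length
    _ ≤ resetThreshold (deltaB k δ) := by
        simpa [hlen] using length_decodeB_le w [] (Nat.zero_le k)

lemma synchronizing_deltaB (hsync : Synchronizing δ) : Synchronizing (deltaB k δ) :=
  let ⟨_, hu⟩ := hsync
  ⟨_, hu.deltaB_flush_append_encodeB δ⟩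

end deltaB

lemma ncard_setOf_length_le_add_one_le (k : ℕ) :
    {l : List Bool | l.length ≤ k}.ncard + 1 ≤ 2 ^ (k + 1) := by
  induction k with
  | zero =>
    have : {l : List Bool | l.length ≤ 0} = {[]} := by ext l; simp
    rw [this, Set.ncard_singleton]
    norm_num
  | succ k ih =>
    have hsplit : {l : List Bool | l.length ≤ k + 1} =
        {l | l.length ≤ k} ∪ {l | l.length = k + 1} := by
      ext l; simp only [Set.mem_ofPred_eq, Set.mem_union]; omega
    have hcard : {l : List Bool | l.length = k + 1}.ncard = 2 ^ (k + 1) := by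
      change Nat.card (List.Vector Bool (k + 1)) = _
      simp
    have := Set.ncard_union_le {l : List Bool | l.length ≤ k} {l | l.length = k + 1}
    rw [hsplit]
    omega

lemma card_states_deltaB_le (Q : Type*) [Fintype Q] (k : ℕ) :
    Nat.card (Q × {w : List Bool // w.length ≤ k}) ≤ 2 * Fintype.card Q * 2 ^ k := by
  have hbuf := ncard_setOf_length_le_add_one_le k
  rw [← Nat.card_coe_set_eq, Set.coe_ofPred] at hbuf
  rw [Nat.card_prod, Nat.card_eq_fintype_card (α := Q)]
  calc Fintype.card Q * Nat.card {w : List Bool // w.length ≤ k}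
      ≤ Fintype.card Q * 2 ^ (k + 1) := Nat.mul_le_mul_left _ (by omega)
    _ = 2 * Fintype.card Q * 2 ^ k := by ring

theorem approximation_transfer_general {Q : Type} [Fintype Q] (k : ℕ)
    (δ : Q → Fin (2 ^ k) → Q) (hsync : Synchronizing δ)
    (d : ℝ) (hd : 0 < d) (f₂B : ℝ)
    (hf₂_lower : (resetThreshold (deltaB k δ) : ℝ) ≤ f₂B)
    (hf₂_upper : f₂B ≤
      d * Real.log (Nat.card (Q × {w : List Bool // w.length ≤ k})) *
        (resetThreshold (deltaB k δ) : ℝ)) :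
    (resetThreshold δ : ℝ) ≤ f₂B / (k + 1) ∧
    f₂B / (k + 1) ≤
      d * Real.log (2 * Fintype.card Q * 2 ^ k) * ((resetThreshold δ : ℝ) + 1) := by
  have hlower : ((k + 1) * resetThreshold δ : ℕ) ≤ (resetThreshold (deltaB k δ) : ℝ) := by
    exact_mod_cast mul_resetThreshold_le_resetThreshold_deltaB δ (synchronizing_deltaB δ hsync)
  have hupper : (resetThreshold (deltaB k δ) : ℝ) ≤ ((k + 1) * (resetThreshold δ + 1) : ℕ) := by
    exact_mod_cast resetThreshold_deltaB_le δ hsync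
  have hlog : Real.log (Nat.card (Q × {w : List Bool // w.length ≤ k})) ≤
      Real.log (2 * Fintype.card Q * 2 ^ k) := by
    exact_mod_cast Real.log_natCast_le_log_natCast (card_states_deltaB_le Q k)
  have hlog_nonneg : 0 ≤ Real.log (2 * Fintype.card Q * 2 ^ k) := by
    exact_mod_cast Real.log_natCast_nonneg (2 * Fintype.card Q * 2 ^ k)
  push_cast at hlower hupper
  constructor
  · rw [le_div_iff₀ (by positivity)]
    linarith
  · rw [div_le_iff₀ (by positivity)]
    calc f₂B ≤ d * Real.log (2 * Fintype.card Q * 2 ^ k) * resetThreshold (deltaB k δ) := by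
          refine hf₂_upper.trans (mul_le_mul_of_nonneg_right ?_ (Nat.cast_nonneg _))
          exact mul_le_mul_of_nonneg_left hlog hd.le
      _ ≤ d * Real.log (2 * Fintype.card Q * 2 ^ k) * ((k + 1) * (resetThreshold δ + 1)) := by
          gcongr
      _ = d * Real.log (2 * Fintype.card Q * 2 ^ k) * (resetThreshold δ + 1) * (k + 1) := by
          ring

/-- If `f₂` approximates the reset threshold of 2-letter automata within factor
`d · ln(n')` (`n'` the number of states), then dividing its value on `B(A)` by
`⌈log₂ m + 1⌉ = k + 1` approximates `rt(A)`:
`rt(A) ≤ f₂(B(A)) / (k+1) ≤ d · ln(2nm) · (rt(A)+1)`. -/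
theorem approximation_transfer {Q : Type} [Fintype Q] [Nonempty Q] (k : ℕ)
    (hk : 1 ≤ k) (δ : Q → Fin (2 ^ k) → Q) (hsync : Synchronizing δ)
    (d : ℝ) (hd : 0 < d) (f₂B : ℝ)
    (hf₂_lower : (resetThreshold (deltaB k δ) : ℝ) ≤ f₂B)
    (hf₂_upper : f₂B ≤
      d * Real.log (Nat.card (Q × {w : List Bool // w.length ≤ k})) *
        (resetThreshold (deltaB k δ) : ℝ)) :
    (resetThreshold δ : ℝ) ≤ f₂B / (k + 1) ∧
    f₂B / (k + 1) ≤
      d * Real.log (2 * Fintype.card Q * 2 ^ k) * ((resetThreshold δ : ℝ) + 1) :=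
  approximation_transfer_general k δ hsync d hd f₂B hf₂_lower hf₂_upper
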